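/- Identification under Mele's meeting restriction, two-step version (footnote to Section 3.3): let Π = Π(ρ, F) be the transition matrix of the network formation game on S = (E → Bool), and suppose ρ e g = ρ e (flip e g) for all e ∈ E and g ∈ S. Then for every g ∈ S and e ∈ E, the two-step transition probabilities satisfy (Π²) g (flip e g) / (Π²) (flip e g) g = F g e / (1 − F g e); hence marginal utilities are identified from the two-step transition matrix when τ₀ = 2. -/

import Mathlib

open Matrix Finset Filter

/-- Flip the link `e` in network `g`. -/
def flipL {E : Type*} [DecidableEq E] (e : E) (g : E → Bool) : E → Bool :=
  Function.update g e (!(g e))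

/-- The one-step transition matrix of the network formation game. -/
noncomputable def netPi {E : Type*} [DecidableEq E] [Fintype E]
    (ρ : E → (E → Bool) → ℝ) (F : (E → Bool) → E → ℝ) :
    Matrix (E → Bool) (E → Bool) ℝ :=
  Matrix.of fun g w =>
    if g = w then ∑ e, ρ e g * (1 - F g e)
    else ∑ e, if w = flipL e g then ρ e g * F g e else 0

/-- A meeting function: strictly positive selection probabilities summing to one. -/
def IsMeeting {E : Type*} [Fintype E] (ρ : E → (E → Bool) → ℝ) : Prop :=
  (∀ e g, 0 < ρ e g) ∧ ∀ g, ∑ e, ρ e g = 1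

/-- An acceptance function: probabilities strictly between 0 and 1, complementary under flips. -/
def IsAcceptance {E : Type*} [DecidableEq E] (F : (E → Bool) → E → ℝ) : Prop :=
  (∀ g e, 0 < F g e ∧ F g e < 1) ∧ ∀ g e, F g e + F (flipL e g) e = 1

/-! The two-step probability of moving across link `e` is the one-step probability of that move
times the total probability of pausing at either endpoint, since any other intermediate network
differs from the target in two coordinates. The pausing factor is symmetric in `g ↔ flipL e g`,
and Mele's restriction makes the meeting probability symmetric too, so both cancel, leaving
`F g e / F (flipL e g) e = F g e / (1 - F g e)`. -/

section flipL

variable {E : Type*} [DecidableEq E]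

@[simp]
lemma flipL_apply_self (e : E) (g : E → Bool) : flipL e g e = !(g e) :=
  Function.update_self _ _ _

lemma flipL_apply_of_ne {a e : E} (h : a ≠ e) (g : E → Bool) : flipL e g a = g a :=
  Function.update_of_ne h _ _

@[simp]
lemma flipL_flipL (e : E) (g : E → Bool) : flipL e (flipL e g) = g := by
  simp [flipL]

lemma flipL_ne (e : E) (g : E → Bool) : flipL e g ≠ g := fun h => by
  simpa using congrFun h e

lemma flipL_left_injective (g : E → Bool) : Function.Injective fun e : E => flipL e g := by
  intro a b h
  by_contra hab
  simpa [flipL_apply_of_ne hab] using congrFun h a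

lemma flipL_flipL_ne_flipL {e e' : E} (h : e' ≠ e) (e'' : E) (g : E → Bool) :
    flipL e'' (flipL e' g) ≠ flipL e g := by
  intro hc
  by_cases he'' : e'' = e'
  · subst he''
    exact flipL_ne e g (by simpa using hc.symm)
  · simpa [flipL_apply_of_ne (Ne.symm he''), flipL_apply_of_ne h] using congrFun hc e'

end flipL

section netPi

variable {E : Type*} [DecidableEq E] [Fintype E] (ρ : E → (E → Bool) → ℝ) (F : (E → Bool) → E → ℝ)

lemma netPi_apply_self (g : E → Bool) : netPi ρ F g g = ∑ e, ρ e g * (1 - F g e) := by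
  simp [netPi]

lemma netPi_apply_flipL (g : E → Bool) (e : E) : netPi ρ F g (flipL e g) = ρ e g * F g e := by
  rw [netPi, Matrix.of_apply, if_neg (flipL_ne e g).symm,
    Finset.sum_eq_single_of_mem e (Finset.mem_univ e)]
  · simp
  · exact fun e' _ he' => if_neg fun h => he' (flipL_left_injective g h.symm)

lemma netPi_apply_eq_zero {g w : E → Bool} (hg : g ≠ w) (hflip : ∀ e, w ≠ flipL e g) :
    netPi ρ F g w = 0 := by
  rw [netPi, Matrix.of_apply, if_neg hg]
  exact Finset.sum_eq_zero fun e _ => if_neg (hflip e)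

lemma netPi_mul_netPi_flipL_eq_zero {g w : E → Bool} {e : E} (hg : w ≠ g) (hge : w ≠ flipL e g) :
    netPi ρ F g w * netPi ρ F w (flipL e g) = 0 := by
  by_cases hw : ∃ e', w = flipL e' g
  · obtain ⟨e', rfl⟩ := hw
    have he' : e' ≠ e := by rintro rfl; exact hge rfl
    rw [netPi_apply_eq_zero ρ F hge fun e'' => (flipL_flipL_ne_flipL he' e'' g).symm, mul_zero]
  · push Not at hw
    rw [netPi_apply_eq_zero ρ F hg.symm hw, zero_mul]

lemma netPi_sq_apply_flipL (g : E → Bool) (e : E) :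
    (netPi ρ F ^ 2) g (flipL e g) =
      netPi ρ F g (flipL e g) * (netPi ρ F g g + netPi ρ F (flipL e g) (flipL e g)) := by
  rw [sq, Matrix.mul_apply, ← Finset.sum_subset (Finset.subset_univ {g, flipL e g}),
    Finset.sum_pair (flipL_ne e g).symm]
  · ring
  · intro w _ hw
    simp only [Finset.mem_insert, Finset.mem_singleton, not_or] at hw
    exact netPi_mul_netPi_flipL_eq_zero ρ F hw.1 hw.2

lemma netPi_apply_self_pos [Nonempty E] (hρ : ∀ e g, 0 < ρ e g) (hF : ∀ g e, F g e < 1)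
    (g : E → Bool) : 0 < netPi ρ F g g := by
  rw [netPi_apply_self]
  exact Finset.sum_pos (fun e _ => mul_pos (hρ e g) (sub_pos.2 (hF g e))) Finset.univ_nonempty

end netPi

theorem mele_identification_two_step_general {E : Type*} [DecidableEq E] [Fintype E]
    (ρ : E → (E → Bool) → ℝ) (F : (E → Bool) → E → ℝ)
    (hρ : IsMeeting ρ) (hF : IsAcceptance F)
    (hmele : ∀ (e : E) (g : E → Bool), ρ e g = ρ e (flipL e g)) :
    ∀ (g : E → Bool) (e : E),
      (netPi ρ F ^ 2) g (flipL e g) / (netPi ρ F ^ 2) (flipL e g) g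
        = F g e / (1 - F g e) := by
  intro g e
  have : Nonempty E := ⟨e⟩
  have hFlip : F (flipL e g) e = 1 - F g e := eq_sub_of_add_eq' (hF.2 g e)
  have hpause : 0 < netPi ρ F g g + netPi ρ F (flipL e g) (flipL e g) :=
    add_pos (netPi_apply_self_pos ρ F hρ.1 (fun g e => (hF.1 g e).2) g)
      (netPi_apply_self_pos ρ F hρ.1 (fun g e => (hF.1 g e).2) _)
  have hback := netPi_sq_apply_flipL ρ F (flipL e g) e
  rw [netPi_apply_flipL, flipL_flipL, hFlip, ← hmele, add_comm] at hback
  rw [hback, netPi_sq_apply_flipL, netPi_apply_flipL, mul_div_mul_right _ _ hpause.ne',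
    mul_div_mul_left _ _ (hρ.1 e g).ne']

/-- Identification under Mele's meeting restriction, two-step version (footnote to
Section 3.3): the ratio of two-step transition probabilities identifies the
acceptance odds, hence marginal utilities are identified when `τ₀ = 2`. -/
theorem mele_identification_two_step {E : Type*} [DecidableEq E] [Fintype E] [Nonempty E]
    (ρ : E → (E → Bool) → ℝ) (F : (E → Bool) → E → ℝ)
    (hρ : IsMeeting ρ) (hF : IsAcceptance F)
    (hmele : ∀ (e : E) (g : E → Bool), ρ e g = ρ e (flipL e g)) :
    ∀ (g : E → Bool) (e : E),
      (netPi ρ F ^ 2) g (flipL e g) / (netPi ρ F ^ 2) (flipL e g) g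
        = F g e / (1 - F g e) :=
  mele_identification_two_step_general ρ F hρ hF hmele
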